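/- Let f : ℝⁿ → ℝ be convex and continuously differentiable with L₁-Lipschitz gradient, and u a standard Gaussian vector. Then for all x ∈ ℝⁿ and μ > 0, |f_μ(x) − f(x)| ≤ (μ²/2)·L₁·n, where f_μ(x) = E_u[f(x+μu)]. -/

import Mathlib

/-!
Write `g = ∇f(x)`. Convexity gives `f(x + v) ≥ f(x) + ⟪g, v⟫`, and the Lipschitz gradient gives
the descent bound `f(x + v) ≤ f(x) + ⟪g, v⟫ + L₁/2 ‖v‖²`. Put `v = μu` and take expectations:
the linear term vanishes because `u` is centred, and `E‖u‖² = n`, so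
`0 ≤ f_μ(x) - f(x) ≤ L₁/2 μ² n`.
-/

open MeasureTheory ProbabilityTheory RealInnerProductSpace Set

namespace ProbabilityTheory

variable {Ω : Type*} [MeasurableSpace Ω] {P : Measure Ω} {X : Ω → ℝ} {m : ℝ} {v : NNReal}

lemma HasLaw.memLp_two_of_gaussianReal (hX : HasLaw X (gaussianReal m v) P) : MemLp X 2 P := by
  rw [← Function.id_comp X, ← memLp_map_measure_iff aestronglyMeasurable_id hX.aemeasurable,
    hX.map_eq]
  exact memLp_id_gaussianReal 2

lemma HasLaw.integrable_of_gaussianReal (hX : HasLaw X (gaussianReal m v) P) :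
    Integrable X P :=
  have := hX.isProbabilityMeasure
  hX.memLp_two_of_gaussianReal.integrable one_le_two

lemma HasLaw.integral_eq_of_gaussianReal (hX : HasLaw X (gaussianReal m v) P) :
    ∫ ω, X ω ∂P = m :=
  hX.integral_eq.trans integral_id_gaussianReal

lemma HasLaw.integral_sq_eq_of_gaussianReal (hX : HasLaw X (gaussianReal m v) P) :
    ∫ ω, X ω ^ 2 ∂P = m ^ 2 + v := by
  have := hX.isProbabilityMeasure
  have := variance_eq_sub hX.memLp_two_of_gaussianReal
  rw [hX.variance_eq, variance_id_gaussianReal, hX.integral_eq_of_gaussianReal] at this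
  simp only [Pi.pow_apply] at this
  linarith

end ProbabilityTheory

section StandardGaussianVector

variable {ι Ω : Type*} [Fintype ι] [MeasurableSpace Ω] {P : Measure Ω} {u : Ω → EuclideanSpace ℝ ι}

lemma integrable_inner_of_hasLaw_gaussianReal
    (hu : ∀ i, HasLaw (fun ω => u ω i) (gaussianReal 0 1) P) (a : EuclideanSpace ℝ ι) :
    Integrable (fun ω => ⟪a, u ω⟫) P := by
  simp only [PiLp.inner_apply, RCLike.inner_apply, conj_trivial]
  exact integrable_finsetSum _ fun i _ =>
    (hu i).integrable_of_gaussianReal.mul_const _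

lemma integral_inner_eq_zero_of_hasLaw_gaussianReal
    (hu : ∀ i, HasLaw (fun ω => u ω i) (gaussianReal 0 1) P) (a : EuclideanSpace ℝ ι) :
    ∫ ω, ⟪a, u ω⟫ ∂P = 0 := by
  simp only [PiLp.inner_apply, RCLike.inner_apply, conj_trivial]
  rw [integral_finsetSum _ fun i _ =>
    (hu i).integrable_of_gaussianReal.mul_const _]
  simp [integral_mul_const, (hu _).integral_eq_of_gaussianReal]

lemma integrable_norm_sq_of_hasLaw_gaussianReal
    (hu : ∀ i, HasLaw (fun ω => u ω i) (gaussianReal 0 1) P) :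
    Integrable (fun ω => ‖u ω‖ ^ 2) P := by
  simp only [EuclideanSpace.real_norm_sq_eq]
  exact integrable_finsetSum _ fun i _ => (hu i).memLp_two_of_gaussianReal.integrable_sq

lemma integral_norm_sq_of_hasLaw_gaussianReal
    (hu : ∀ i, HasLaw (fun ω => u ω i) (gaussianReal 0 1) P) :
    ∫ ω, ‖u ω‖ ^ 2 ∂P = Fintype.card ι := by
  simp only [EuclideanSpace.real_norm_sq_eq]
  rw [integral_finsetSum _ fun i _ => (hu i).memLp_two_of_gaussianReal.integrable_sq]
  simp [(hu _).integral_sq_eq_of_gaussianReal]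

end StandardGaussianVector

section Descent

variable {E : Type*} [NormedAddCommGroup E] [InnerProductSpace ℝ E] [CompleteSpace E] {f : E → ℝ}

lemma hasDerivAt_apply_add_smul {x v : E} {t : ℝ} (hf : DifferentiableAt ℝ f (x + t • v)) :
    HasDerivAt (fun s : ℝ => f (x + s • v)) ⟪gradient f (x + t • v), v⟫ t := by
  have hline : HasDerivAt (fun s : ℝ => x + s • v) v t := by
    simpa using ((hasDerivAt_id t).smul_const v).const_add x
  have h := hf.hasGradientAt.hasFDerivAt.comp_hasDerivAt t hline
  simp only [InnerProductSpace.toDual_apply_apply] at h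
  exact h

lemma ConvexOn.apply_add_inner_gradient_le (hf : ConvexOn ℝ univ f) {x : E}
    (hdiff : DifferentiableAt ℝ f x) (v : E) : f x + ⟪gradient f x, v⟫ ≤ f (x + v) := by
  have hline : ConvexOn ℝ univ fun t : ℝ => f (x + t • v) := by
    simpa [Function.comp_def, AffineMap.lineMap_apply, add_comm]
      using hf.comp_affineMap (AffineMap.lineMap x (x + v))
  have := hline.le_slope_of_hasDerivAt (mem_univ 0) (mem_univ 1) one_pos
    (hasDerivAt_apply_add_smul (by simpa using hdiff))
  simp only [slope_def_field] at this
  simpa [le_sub_iff_add_le'] using this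

lemma apply_add_le_of_lipschitz_gradient {L : ℝ} (hdiff : Differentiable ℝ f)
    (hlip : ∀ x y, ‖gradient f x - gradient f y‖ ≤ L * ‖x - y‖) (x v : E) :
    f (x + v) ≤ f x + ⟪gradient f x, v⟫ + L / 2 * ‖v‖ ^ 2 := by
  -- The quadratic correction makes `ψ` antitone on `[0, ∞)`, so `ψ 1 ≤ ψ 0`.
  set ψ : ℝ → ℝ := fun t => f (x + t • v) - t * ⟪gradient f x, v⟫ - L / 2 * ‖v‖ ^ 2 * t ^ 2
  have hψ : ∀ t, HasDerivAt ψ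
      (⟪gradient f (x + t • v) - gradient f x, v⟫ - L * ‖v‖ ^ 2 * t) t := by
    intro t
    refine (((hasDerivAt_apply_add_smul (hdiff _)).sub
      ((hasDerivAt_id t).mul_const _)).sub ((hasDerivAt_pow 2 t).const_mul _)).congr_deriv ?_
    rw [inner_sub_left]
    simp only [one_mul, Nat.cast_ofNat, Nat.add_one_sub_one, pow_one]
    ring
  have hψ' : ∀ t ∈ interior (Ici (0 : ℝ)),
      ⟪gradient f (x + t • v) - gradient f x, v⟫ - L * ‖v‖ ^ 2 * t ≤ 0 := by
    intro t ht
    rw [interior_Ici] at ht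
    have hlip_t := hlip (x + t • v) x
    rw [add_sub_cancel_left, norm_smul, Real.norm_of_nonneg ht.out.le] at hlip_t
    have := calc ⟪gradient f (x + t • v) - gradient f x, v⟫
        ≤ ‖gradient f (x + t • v) - gradient f x‖ * ‖v‖ := real_inner_le_norm _ _
      _ ≤ L * (t * ‖v‖) * ‖v‖ := by gcongr
      _ = L * ‖v‖ ^ 2 * t := by ring
    linarith
  have := antitoneOn_of_hasDerivWithinAt_nonpos (convex_Ici 0)
    (fun t _ => (hψ t).continuousAt.continuousWithinAt)
    (fun t _ => (hψ t).hasDerivWithinAt) hψ' self_mem_Ici (zero_le_one' ℝ) zero_le_one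
  simp only [ψ, zero_smul, add_zero, one_smul, zero_mul, sub_zero, one_mul, one_pow] at this
  linarith

end Descent

section Smoothing

variable {E Ω : Type*} [NormedAddCommGroup E] [InnerProductSpace ℝ E] [CompleteSpace E]
  {f : E → ℝ} [MeasurableSpace Ω] {P : Measure Ω} [IsProbabilityMeasure P]

lemma abs_integral_apply_add_sub_le {L : ℝ} (hf : ConvexOn ℝ univ f) (hdiff : Differentiable ℝ f)
    (hlip : ∀ x y, ‖gradient f x - gradient f y‖ ≤ L * ‖x - y‖) (x : E) {w : Ω → E}
    (hint : Integrable (fun ω => f (x + w ω)) P)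
    (hlin : Integrable (fun ω => ⟪gradient f x, w ω⟫) P)
    (hcentered : ∫ ω, ⟪gradient f x, w ω⟫ ∂P = 0) (hsq : Integrable (fun ω => ‖w ω‖ ^ 2) P) :
    |(∫ ω, f (x + w ω) ∂P) - f x| ≤ L / 2 * ∫ ω, ‖w ω‖ ^ 2 ∂P := by
  have hshift : Integrable (fun ω => f (x + w ω) - f x) P := hint.sub (integrable_const _)
  have hgap_int : Integrable (fun ω => f (x + w ω) - f x - ⟪gradient f x, w ω⟫) P :=
    hshift.sub hlin
  have hgap : ∫ ω, (f (x + w ω) - f x - ⟪gradient f x, w ω⟫) ∂P = (∫ ω, f (x + w ω) ∂P) - f x := by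
    rw [integral_sub hshift hlin, integral_sub hint (integrable_const _), hcentered, integral_const]
    simp
  have hlower : ∀ ω, 0 ≤ f (x + w ω) - f x - ⟪gradient f x, w ω⟫ := fun ω => by
    linarith [hf.apply_add_inner_gradient_le (hdiff x) (w ω)]
  have hupper : ∀ ω, f (x + w ω) - f x - ⟪gradient f x, w ω⟫ ≤ L / 2 * ‖w ω‖ ^ 2 := fun ω => by
    linarith [apply_add_le_of_lipschitz_gradient hdiff hlip x (w ω)]
  rw [← hgap, abs_of_nonneg (integral_nonneg hlower), ← integral_const_mul]
  exact integral_mono hgap_int (hsq.const_mul _) hupper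

end Smoothing

theorem gaussian_smoothing_error_bound_general {n : ℕ} {Ω : Type*} [MeasurableSpace Ω]
    (P : Measure Ω) [IsProbabilityMeasure P]
    (u : Ω → EuclideanSpace ℝ (Fin n))
    (hmeas : ∀ i, Measurable fun ω => u ω i)
    (hlaw : ∀ i, Measure.map (fun ω => u ω i) P = gaussianReal 0 1)
    (f : EuclideanSpace ℝ (Fin n) → ℝ) (L₁ : ℝ)
    (hf : ConvexOn ℝ Set.univ f) (hdiff : Differentiable ℝ f)
    (hlip : ∀ x y, ‖gradient f x - gradient f y‖ ≤ L₁ * ‖x - y‖)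
    (μ : ℝ) (x : EuclideanSpace ℝ (Fin n))
    (hint : Integrable (fun ω => f (x + μ • u ω)) P) :
    |(∫ ω, f (x + μ • u ω) ∂P) - f x| ≤ μ ^ 2 / 2 * L₁ * n := by
  have hu : ∀ i, HasLaw (fun ω => u ω i) (gaussianReal 0 1) P :=
    fun i => ⟨(hmeas i).aemeasurable, hlaw i⟩
  have hnorm_sq : ∀ ω, ‖μ • u ω‖ ^ 2 = μ ^ 2 * ‖u ω‖ ^ 2 := fun ω => by
    rw [norm_smul, mul_pow, Real.norm_eq_abs, sq_abs]
  have hbound := abs_integral_apply_add_sub_le hf hdiff hlip x hint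
    (by simpa only [inner_smul_right] using
      (integrable_inner_of_hasLaw_gaussianReal hu (gradient f x)).const_mul μ)
    (by simp only [inner_smul_right, integral_const_mul,
      integral_inner_eq_zero_of_hasLaw_gaussianReal hu, mul_zero])
    (by simpa only [hnorm_sq] using
      (integrable_norm_sq_of_hasLaw_gaussianReal hu).const_mul (μ ^ 2))
  rw [funext hnorm_sq, integral_const_mul, integral_norm_sq_of_hasLaw_gaussianReal hu,
    Fintype.card_fin] at hbound
  linarith

theorem gaussian_smoothing_error_bound {n : ℕ} {Ω : Type*} [MeasurableSpace Ω]
    (P : Measure Ω) [IsProbabilityMeasure P]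
    (u : Ω → EuclideanSpace ℝ (Fin n))
    (hmeas : ∀ i, Measurable fun ω => u ω i)
    (hlaw : ∀ i, Measure.map (fun ω => u ω i) P = gaussianReal 0 1)
    (hindep : iIndepFun (fun i ω => u ω i) P)
    (f : EuclideanSpace ℝ (Fin n) → ℝ) (L₁ : ℝ)
    (hf : ConvexOn ℝ Set.univ f) (hdiff : Differentiable ℝ f)
    (hlip : ∀ x y, ‖gradient f x - gradient f y‖ ≤ L₁ * ‖x - y‖)
    (μ : ℝ) (hμ : 0 < μ) (x : EuclideanSpace ℝ (Fin n))
    (hint : Integrable (fun ω => f (x + μ • u ω)) P) :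
    |(∫ ω, f (x + μ • u ω) ∂P) - f x| ≤ μ ^ 2 / 2 * L₁ * n :=
  gaussian_smoothing_error_bound_general P u hmeas hlaw f L₁ hf hdiff hlip μ x hint
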